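/- Let G be a group generated by a finite symmetric set S, let d, w ∈ ℕ, and let A be a d×d matrix over ℂ[G] whose entries all have support contained in B_w. Let (F_n) be a Følner exhaustion of G such that dim V(F_n)/|F_n| → c ∈ ℝ. Then: (i) for every δ > 0 there exist ε > 0 and N such that for all n ≥ N and every subset K ⊆ F_n with |K| ≥ (1−ε)|F_n|, the space R(K) := {f : Fin d → ℂ[G] | every coordinate of f is supported in Ω_w(K) and A.mulVec f = 0} satisfies dim R(K) ≥ (1−δ)·c·|F_n|; (ii) for every δ > 0 there exists N such that for all n ≥ N, the image of Z(F_n) under the linear map restricting each coordinate of f to F_n (i.e. multiplying each coordinate by the indicator of F_n) has ℂ-dimension at most (c + δ)|F_n|. -/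

import Mathlib

open Pointwise Filter Topology

section Defs

variable {G : Type*} [Group G]

/-- The word ball of radius `k` with respect to the generating set `S`. -/
noncomputable def wball (S : Finset G) (k : ℕ) : Finset G :=
  letI := Classical.decEq G
  (insert (1 : G) S) ^ k

/-- The `k`-neighborhood `B_k(F) = B_k * F` of a finite set `F`. -/
noncomputable def wnbhd (S : Finset G) (k : ℕ) (F : Finset G) : Finset G :=
  letI := Classical.decEq G
  wball S k * F

/-- The `k`-interior `Ω_k(F)` of a finite set `F`. -/
noncomputable def winter (S : Finset G) (k : ℕ) (F : Finset G) : Finset G :=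
  letI := Classical.decEq G
  F.filter fun p => wball S k * {p} ⊆ F

/-- The boundary `∂F` of a finite set `F`. -/
noncomputable def wbdry (S : Finset G) (F : Finset G) : Finset G :=
  letI := Classical.decEq G
  F.filter fun p => ∃ s ∈ S, s * p ∉ F

/-- `S` is a finite symmetric generating set. -/
def IsSymmGen (S : Finset G) : Prop :=
  (∀ s ∈ S, s⁻¹ ∈ S) ∧ Subgroup.closure (S : Set G) = ⊤

/-- A Følner exhaustion of `G`. -/
def IsFolnerExhaustion (S : Finset G) (F : ℕ → Finset G) : Prop :=
  (1 : G) ∈ F 0 ∧ Monotone F ∧ (∀ g : G, ∃ n, g ∈ F n) ∧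
    Filter.Tendsto (fun n => ((wbdry S (F n)).card : ℝ) / ((F n).card : ℝ))
      Filter.atTop (nhds 0)

variable {d : ℕ}

/-- The space of vectors supported in `Fs` such that `A.mulVec f` vanishes on `Fv`. -/
noncomputable def kerOn (A : Matrix (Fin d) (Fin d) (MonoidAlgebra ℂ G))
    (Fs Fv : Finset G) : Submodule ℂ (Fin d → MonoidAlgebra ℂ G) where
  carrier := {f | (∀ i, (f i).coeff.support ⊆ Fs) ∧ ∀ i, ∀ g ∈ Fv, (A.mulVec f i).coeff g = 0}
  zero_mem' := ⟨fun i => by simp, fun i g hg => by simp [Matrix.mulVec_zero]⟩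
  add_mem' := by
    classical
    rintro f g ⟨hf1, hf2⟩ ⟨hg1, hg2⟩
    constructor
    · intro i
      exact Finsupp.support_add.trans (Finset.union_subset (hf1 i) (hg1 i))
    · intro i x hx
      have h : A.mulVec (f + g) = A.mulVec f + A.mulVec g := Matrix.mulVec_add A f g
      rw [h]
      show (A.mulVec f i + A.mulVec g i).coeff x = 0
      rw [MonoidAlgebra.coeff_add, Finsupp.add_apply, hf2 i x hx, hg2 i x hx, add_zero]
  smul_mem' := by
    classical
    rintro c f ⟨hf1, hf2⟩
    constructor
    · intro i
      exact (Finsupp.support_smul).trans (hf1 i)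
    · intro i x hx
      have h : A.mulVec (c • f) = c • A.mulVec f := Matrix.mulVec_smul A c f
      rw [h]
      show (c • A.mulVec f i).coeff x = 0
      rw [MonoidAlgebra.coeff_smul, Finsupp.smul_apply, hf2 i x hx, smul_zero]

/-- The space of vectors supported in `Fs` with `A.mulVec f = 0`. -/
noncomputable def kerAll (A : Matrix (Fin d) (Fin d) (MonoidAlgebra ℂ G))
    (Fs : Finset G) : Submodule ℂ (Fin d → MonoidAlgebra ℂ G) where
  carrier := {f | (∀ i, (f i).coeff.support ⊆ Fs) ∧ A.mulVec f = 0}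
  zero_mem' := ⟨fun i => by simp, Matrix.mulVec_zero A⟩
  add_mem' := by
    classical
    rintro f g ⟨hf1, hf2⟩ ⟨hg1, hg2⟩
    exact ⟨fun i => Finsupp.support_add.trans (Finset.union_subset (hf1 i) (hg1 i)),
      by rw [Matrix.mulVec_add, hf2, hg2, add_zero]⟩
  smul_mem' := by
    classical
    rintro c f ⟨hf1, hf2⟩
    exact ⟨fun i => (Finsupp.support_smul).trans (hf1 i),
      by rw [Matrix.mulVec_smul, hf2, smul_zero]⟩

/-- `V(F)`. -/
noncomputable def VSpace (A : Matrix (Fin d) (Fin d) (MonoidAlgebra ℂ G)) (F : Finset G) :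
    Submodule ℂ (Fin d → MonoidAlgebra ℂ G) :=
  kerOn A F F

/-- `Z(F)`. -/
noncomputable def ZSpace (S : Finset G) (w : ℕ) (A : Matrix (Fin d) (Fin d) (MonoidAlgebra ℂ G))
    (F : Finset G) : Submodule ℂ (Fin d → MonoidAlgebra ℂ G) :=
  kerOn A (wnbhd S w F) F

/-- `W(F)`. -/
noncomputable def WSpace (S : Finset G) (w : ℕ) (A : Matrix (Fin d) (Fin d) (MonoidAlgebra ℂ G))
    (F : Finset G) : Submodule ℂ (Fin d → MonoidAlgebra ℂ G) :=
  kerAll A (winter S w F)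

/-- `A.mulVec` as a `ℂ`-linear map. -/
noncomputable def mulVecL {R : Type*} [Ring R] [Algebra ℂ R] {d : ℕ}
    (A : Matrix (Fin d) (Fin d) R) : (Fin d → R) →ₗ[ℂ] (Fin d → R) where
  toFun := A.mulVec
  map_add' := Matrix.mulVec_add A
  map_smul' c v := Matrix.mulVec_smul A c v

/-- Coordinatewise restriction to `F` (multiplication by the indicator of `F`). -/
noncomputable def restrictTo (d : ℕ) (F : Finset G) :
    (Fin d → MonoidAlgebra ℂ G) →ₗ[ℂ] (Fin d → MonoidAlgebra ℂ G) :=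
  letI := Classical.decEq G
  { toFun := fun f i => MonoidAlgebra.ofCoeff ((f i).coeff.filter (· ∈ F))
    map_add' := fun f g => by
      funext i
      exact congrArg MonoidAlgebra.ofCoeff Finsupp.filter_add
    map_smul' := fun c f => by
      funext i
      exact congrArg MonoidAlgebra.ofCoeff Finsupp.filter_smul }

end Defs

section Tiling

variable {ι α : Type*}

/-- An `ε`-disjoint family of finite sets. -/
def EpsDisjoint (I : Finset ι) (A : ι → Finset α) (ε : ℝ) : Prop :=
  ∃ Ab : ι → Finset α, (∀ i ∈ I, Ab i ⊆ A i) ∧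
    (∀ i ∈ I, ((1 - ε) * (A i).card : ℝ) ≤ ((Ab i).card : ℝ)) ∧
    ∀ i ∈ I, ∀ j ∈ I, i ≠ j → Disjoint (Ab i) (Ab j)

/-- The family `(A i)_{i ∈ I}` `a`-covers `X`. -/
def CoversFrac (I : Finset ι) (A : ι → Finset α) (X : Finset α) (a : ℝ) : Prop :=
  letI := Classical.decEq α
  (a * X.card : ℝ) ≤ ((X ∩ I.biUnion A).card : ℝ)

/-- The family `(A i)_{i ∈ I}` `δ`-evenly covers `X`. -/
def EvenCovering (I : Finset ι) (A : ι → Finset α) (X : Finset α) (δ : ℝ) : Prop :=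
  letI := Classical.decEq α
  ∃ M : ℕ, 1 ≤ M ∧ (∀ p ∈ X, (I.filter fun i => p ∈ A i).card ≤ M) ∧
    ((1 - δ) * M * X.card : ℝ) ≤ ∑ i ∈ I, ((A i).card : ℝ)

/-- The right translate `H·x`. -/
noncomputable def rtrans [Mul α] (H : Finset α) (x : α) : Finset α :=
  letI := Classical.decEq α
  H.image (· * x)

end Tiling

section Supp

variable {G : Type*} [Group G]

/-- Vectors all of whose coordinates are supported in `F`. -/
noncomputable def suppIn (d : ℕ) (F : Finset G) :
    Submodule ℂ (Fin d → MonoidAlgebra ℂ G) where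
  carrier := {f | ∀ i, (f i).coeff.support ⊆ F}
  zero_mem' := fun i => by simp
  add_mem' := by
    classical
    intro f g hf hg i
    exact Finsupp.support_add.trans (Finset.union_subset (hf i) (hg i))
  smul_mem' := fun c f hf i => (Finsupp.support_smul).trans (hf i)

end Supp

/-! Both bounds are rank–nullity estimates. On `V(F)`, the coefficients on the layer
`F \ Ω_{2w}(K)` form a linear map whose kernel lies in `R(K)`: for `f` supported in `Ω_{2w}(K)`,
`A f` is supported in `Ω_w(K) ⊆ F`, where it vanishes, so `A f = 0`. The restriction to `F` of a
vector of `Z(F)` still satisfies the equations on `Ω_w(F)`, and on such vectors the values of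
`A f` on the layer `F \ Ω_w(F)` form a linear map whose kernel lies in `V(F)`. Every point of
such a layer is `B_k`-close to `∂F` or to `F \ K` (follow a word that leaves `K` until it first
leaves `F`), so the layers have `O(|∂F| + |F \ K|)` points, which the Følner condition makes
`o(|F|)`. -/

open Finset Module

section WordBall

variable {G : Type*} [Group G] {S : Finset G}

lemma one_mem_wball (S : Finset G) (k : ℕ) : (1 : G) ∈ wball S k := by
  classical
  unfold wball
  exact one_mem_pow (mem_insert_self 1 S)

lemma mul_mem_wball {b c : G} {j k : ℕ} (hb : b ∈ wball S j) (hc : c ∈ wball S k) :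
    b * c ∈ wball S (j + k) := by
  classical
  unfold wball at *
  rw [pow_add]
  exact mul_mem_mul hb hc

lemma wball_mono {j k : ℕ} (h : j ≤ k) : wball S j ⊆ wball S k := fun b hb => by
  simpa [Nat.add_sub_cancel' h] using mul_mem_wball hb (one_mem_wball S (k - j))

lemma inv_mem_wball (hS : ∀ s ∈ S, s⁻¹ ∈ S) {k : ℕ} {b : G} (hb : b ∈ wball S k) :
    b⁻¹ ∈ wball S k := by
  classical
  have hS' : S⁻¹ = S :=
    eq_of_subset_of_card_le (fun s hs => by simpa using hS _ (mem_inv'.mp hs)) (card_inv S).ge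
  unfold wball at *
  rw [← inv_inv (insert 1 S), inv_insert, inv_one, hS', inv_pow]
  exact inv_mem_inv hb

lemma mem_wnbhd {k : ℕ} {X : Finset G} {p : G} :
    p ∈ wnbhd S k X ↔ ∃ b ∈ wball S k, ∃ x ∈ X, b * x = p := by
  classical
  exact mem_mul

lemma card_wnbhd_le (k : ℕ) (X : Finset G) : #(wnbhd S k X) ≤ #(wball S k) * #X := by
  classical
  exact card_mul_le

lemma mem_winter {k : ℕ} {F : Finset G} {p : G} :
    p ∈ winter S k F ↔ p ∈ F ∧ ∀ b ∈ wball S k, b * p ∈ F := by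
  classical
  simp [winter, subset_iff, Finset.mem_mul]

lemma winter_subset (k : ℕ) (F : Finset G) : winter S k F ⊆ F := fun _ hp => (mem_winter.mp hp).1

lemma winter_anti {j k : ℕ} (h : j ≤ k) (F : Finset G) : winter S k F ⊆ winter S j F := fun _ hp =>
  mem_winter.mpr ⟨(mem_winter.mp hp).1, fun b hb => (mem_winter.mp hp).2 b (wball_mono h hb)⟩

lemma wnbhd_winter_subset (j k : ℕ) (F : Finset G) :
    wnbhd S j (winter S (j + k) F) ⊆ winter S k F := by
  intro p hp
  obtain ⟨b, hb, x, hx, rfl⟩ := mem_wnbhd.mp hp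
  rw [mem_winter] at hx ⊢
  refine ⟨hx.2 b (wball_mono (by omega) hb), fun c hc => ?_⟩
  rw [← mul_assoc]
  exact hx.2 (c * b) (by rw [Nat.add_comm]; exact mul_mem_wball hc hb)

lemma disjoint_winter_wnbhd (hS : ∀ s ∈ S, s⁻¹ ∈ S) {k : ℕ} {F X : Finset G}
    (h : Disjoint F X) : Disjoint (winter S k F) (wnbhd S k X) := by
  refine disjoint_left.mpr fun p hp hpX => ?_
  obtain ⟨b, hb, x, hx, rfl⟩ := mem_wnbhd.mp hpX
  have hxF : b⁻¹ * (b * x) ∈ F := (mem_winter.mp hp).2 _ (inv_mem_wball hS hb)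
  rw [inv_mul_cancel_left] at hxF
  exact disjoint_left.mp h hxF hx

lemma mem_wnbhd_wbdry_of_mul_notMem (hS : ∀ s ∈ S, s⁻¹ ∈ S) {F : Finset G} {p : G}
    (hp : p ∈ F) : ∀ {k : ℕ} {b : G}, b ∈ wball S k → b * p ∉ F → p ∈ wnbhd S k (wbdry S F) := by
  classical
  intro k
  induction k with
  | zero =>
    intro b hb hbp
    simp only [wball, pow_zero, Finset.mem_one] at hb
    simp [hb, hp] at hbp
  | succ k ih =>
    intro b hb hbp
    unfold wball at hb
    rw [pow_succ'] at hb
    obtain ⟨s, hs, x, hx, rfl⟩ := mem_mul.mp hb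
    by_cases hxp : x * p ∈ F
    · have hs1 : s ∈ S := by
        rcases mem_insert.mp hs with rfl | hs
        · simp_all
        · exact hs
      have hq : x * p ∈ wbdry S F := by
        unfold wbdry
        exact mem_filter.mpr ⟨hxp, s, hs1, by rwa [← mul_assoc]⟩
      refine mem_wnbhd.mpr ⟨x⁻¹, wball_mono k.le_succ (inv_mem_wball hS hx), x * p, hq, ?_⟩
      exact inv_mul_cancel_left x p
    · obtain ⟨c, hc, q, hq, rfl⟩ := mem_wnbhd.mp (ih hx hxp)
      exact mem_wnbhd.mpr ⟨c, wball_mono k.le_succ hc, q, hq, rfl⟩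

lemma sdiff_winter_subset [DecidableEq G] (hS : ∀ s ∈ S, s⁻¹ ∈ S) (F K : Finset G)
    (k : ℕ) : F \ winter S k K ⊆ wnbhd S k (wbdry S F ∪ F \ K) := by
  intro p hp
  obtain ⟨hpF, hpK⟩ := mem_sdiff.mp hp
  have mem_of_sdiff {b : G} (hb : b ∈ wball S k) (hbp : b * p ∈ F \ K) :
      p ∈ wnbhd S k (wbdry S F ∪ F \ K) :=
    mem_wnbhd.mpr ⟨b⁻¹, inv_mem_wball hS hb, b * p, mem_union_right _ hbp, inv_mul_cancel_left b p⟩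
  by_cases hpK' : p ∈ K
  · obtain ⟨b, hb, hbp⟩ : ∃ b ∈ wball S k, b * p ∉ K := by
      by_contra! h
      exact hpK (mem_winter.mpr ⟨hpK', h⟩)
    by_cases hbpF : b * p ∈ F
    · exact mem_of_sdiff hb (mem_sdiff.mpr ⟨hbpF, hbp⟩)
    · obtain ⟨c, hc, q, hq, rfl⟩ := mem_wnbhd.mp (mem_wnbhd_wbdry_of_mul_notMem hS hpF hb hbpF)
      exact mem_wnbhd.mpr ⟨c, hc, q, mem_union_left _ hq, rfl⟩
  · exact mem_of_sdiff (one_mem_wball S k) (by simpa using mem_sdiff.mpr ⟨hpF, hpK'⟩)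

lemma card_sdiff_winter_le [DecidableEq G] (hS : ∀ s ∈ S, s⁻¹ ∈ S) (F K : Finset G)
    (k : ℕ) : #(F \ winter S k K) ≤ #(wball S k) * (#(wbdry S F) + #(F \ K)) :=
  calc #(F \ winter S k K) ≤ #(wnbhd S k (wbdry S F ∪ F \ K)) :=
        card_le_card (sdiff_winter_subset hS F K k)
    _ ≤ #(wball S k) * #(wbdry S F ∪ F \ K) := card_wnbhd_le k _
    _ ≤ #(wball S k) * (#(wbdry S F) + #(F \ K)) := Nat.mul_le_mul_left _ (card_union_le _ _)

end WordBall

lemma Submodule.finrank_le_finrank_add_finrank_of_inf_ker_le {K M N : Type*} [DivisionRing K]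
    [AddCommGroup M] [Module K M] [AddCommGroup N] [Module K N] [FiniteDimensional K N]
    {V W : Submodule K M} [FiniteDimensional K V] [FiniteDimensional K W] (φ : M →ₗ[K] N)
    (h : V ⊓ LinearMap.ker φ ≤ W) : finrank K V ≤ finrank K W + finrank K N := by
  have hrank := LinearMap.finrank_range_add_finrank_ker (φ.domRestrict V)
  have hrange : finrank K (LinearMap.range (φ.domRestrict V)) ≤ finrank K N :=
    Submodule.finrank_le _
  have hker : finrank K (LinearMap.ker (φ.domRestrict V)) ≤ finrank K W := by
    rw [← Submodule.finrank_map_subtype_eq]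
    refine Submodule.finrank_mono ?_
    rintro _ ⟨x, hx, rfl⟩
    exact h ⟨x.2, hx⟩
  omega

section GroupAlgebra

variable {G : Type*} {d : ℕ}

noncomputable def coeffsOn (d : ℕ) (X : Finset G) :
    (Fin d → MonoidAlgebra ℂ G) →ₗ[ℂ] (Fin d → X → ℂ) where
  toFun f i x := (f i).coeff x
  map_add' _ _ := rfl
  map_smul' _ _ := rfl

lemma finrank_coeffsOn_codomain (d : ℕ) (X : Finset G) :
    finrank ℂ (Fin d → X → ℂ) = d * #X := by
  rw [Module.finrank_pi_fintype]
  simp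

lemma coeffsOn_injOn_suppIn (X : Finset G) : Set.InjOn (coeffsOn d X) (suppIn d X) := by
  intro f hf g hg hfg
  funext i
  refine MonoidAlgebra.coeff_injective (Finsupp.ext fun x => ?_)
  by_cases hx : x ∈ X
  · exact congrFun (congrFun hfg i) ⟨x, hx⟩
  · rw [Finsupp.notMem_support_iff.mp fun h => hx (hf i h),
      Finsupp.notMem_support_iff.mp fun h => hx (hg i h)]

instance (X : Finset G) : FiniteDimensional ℂ (suppIn d X) :=
  .of_injective ((coeffsOn d X).domRestrict _) fun f g hfg =>
    Subtype.ext (coeffsOn_injOn_suppIn X f.2 g.2 hfg)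

lemma coeff_restrictTo_of_mem {F : Finset G} {x : G} (hx : x ∈ F)
    (f : Fin d → MonoidAlgebra ℂ G) (i : Fin d) : (restrictTo d F f i).coeff x = (f i).coeff x := by
  simp [restrictTo, hx]

lemma coeff_restrictTo_of_notMem {F : Finset G} {x : G} (hx : x ∉ F)
    (f : Fin d → MonoidAlgebra ℂ G) (i : Fin d) : (restrictTo d F f i).coeff x = 0 := by
  simp [restrictTo, hx]

lemma restrictTo_mem_suppIn (F : Finset G) (f : Fin d → MonoidAlgebra ℂ G) :
    restrictTo d F f ∈ suppIn d F := fun i x hx => by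
  by_contra hxF
  exact Finsupp.mem_support_iff.mp hx (coeff_restrictTo_of_notMem hxF f i)

lemma sub_restrictTo_mem_suppIn [DecidableEq G] {X : Finset G} {f : Fin d → MonoidAlgebra ℂ G}
    (hf : f ∈ suppIn d X) (F : Finset G) : f - restrictTo d F f ∈ suppIn d (X \ F) := by
  intro i x hx
  rw [Finsupp.mem_support_iff, Pi.sub_apply, MonoidAlgebra.coeff_sub, Finsupp.sub_apply] at hx
  by_cases hxF : x ∈ F
  · rw [coeff_restrictTo_of_mem hxF, sub_self] at hx
    exact absurd rfl hx
  · rw [coeff_restrictTo_of_notMem hxF, sub_zero] at hx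
    exact mem_sdiff.mpr ⟨hf i (Finsupp.mem_support_iff.mpr hx), hxF⟩

variable [Group G]

lemma kerOn_le_suppIn (A : Matrix (Fin d) (Fin d) (MonoidAlgebra ℂ G)) (Fs Fv : Finset G) :
    kerOn A Fs Fv ≤ suppIn d Fs :=
  fun _ hf => hf.1

lemma kerAll_le_suppIn (A : Matrix (Fin d) (Fin d) (MonoidAlgebra ℂ G)) (Fs : Finset G) :
    kerAll A Fs ≤ suppIn d Fs :=
  fun _ hf => hf.1

instance (A : Matrix (Fin d) (Fin d) (MonoidAlgebra ℂ G)) (Fs Fv : Finset G) :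
    FiniteDimensional ℂ (kerOn A Fs Fv) :=
  Submodule.finiteDimensional_of_le (kerOn_le_suppIn A Fs Fv)

instance (A : Matrix (Fin d) (Fin d) (MonoidAlgebra ℂ G)) (Fs : Finset G) :
    FiniteDimensional ℂ (kerAll A Fs) :=
  Submodule.finiteDimensional_of_le (kerAll_le_suppIn A Fs)

instance (A : Matrix (Fin d) (Fin d) (MonoidAlgebra ℂ G)) (F : Finset G) :
    FiniteDimensional ℂ (VSpace A F) :=
  inferInstanceAs (FiniteDimensional ℂ (kerOn A F F))

lemma support_mulVec_subset {S : Finset G} {w : ℕ}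
    {A : Matrix (Fin d) (Fin d) (MonoidAlgebra ℂ G)} (hA : ∀ i j, (A i j).coeff.support ⊆ wball S w)
    {X : Finset G} {f : Fin d → MonoidAlgebra ℂ G} (hf : f ∈ suppIn d X) (i : Fin d) :
    (A.mulVec f i).coeff.support ⊆ wnbhd S w X := by
  classical
  intro p hp
  obtain ⟨j, -, hj⟩ := exists_ne_zero_of_sum_ne_zero (by
    simpa [Matrix.mulVec, dotProduct, MonoidAlgebra.coeff_sum] using hp)
  obtain ⟨b, hb, x, hx, rfl⟩ :=
    mem_mul.mp (MonoidAlgebra.support_coeff_mul_subset _ _ (Finsupp.mem_support_iff.mpr hj))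
  exact mem_wnbhd.mpr ⟨b, hA i j hb, x, hf j hx, rfl⟩

end GroupAlgebra

section Estimates

variable {G : Type*} [Group G] {S : Finset G} {d w : ℕ}
  {A : Matrix (Fin d) (Fin d) (MonoidAlgebra ℂ G)}

lemma VSpace_inf_ker_coeffsOn_le_kerAll [DecidableEq G]
    (hA : ∀ i j, (A i j).coeff.support ⊆ wball S w) {F K : Finset G} (hK : K ⊆ F) :
    VSpace A F ⊓ LinearMap.ker (coeffsOn d (F \ winter S (w + w) K)) ≤
      kerAll A (winter S w K) := by
  rintro f ⟨⟨hfF, hAf⟩, hf0⟩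
  have hsupp : f ∈ suppIn d (winter S (w + w) K) := by
    intro i x hx
    by_contra hxK
    exact Finsupp.mem_support_iff.mp hx
      (congrFun (congrFun hf0 i) ⟨x, mem_sdiff.mpr ⟨hfF i hx, hxK⟩⟩)
  refine ⟨fun i => (hsupp i).trans (winter_anti (by omega) K), funext fun i => ?_⟩
  refine MonoidAlgebra.coeff_injective (Finsupp.ext fun g => ?_)
  by_cases hg : g ∈ F
  · exact hAf i g hg
  · refine Finsupp.notMem_support_iff.mp fun hg' => hg (hK ?_)
    exact winter_subset w K (wnbhd_winter_subset w w K (support_mulVec_subset hA hsupp i hg'))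

lemma finrank_VSpace_le_finrank_kerAll_winter [DecidableEq G] (hS : ∀ s ∈ S, s⁻¹ ∈ S)
    (hA : ∀ i j, (A i j).coeff.support ⊆ wball S w) {F K : Finset G} (hK : K ⊆ F) :
    finrank ℂ (VSpace A F) ≤
      finrank ℂ (kerAll A (winter S w K)) + d * (#(wball S (w + w)) * (#(wbdry S F) + #(F \ K))) :=
  calc finrank ℂ (VSpace A F)
      ≤ finrank ℂ (kerAll A (winter S w K)) + d * #(F \ winter S (w + w) K) := by
        rw [← finrank_coeffsOn_codomain]
        exact Submodule.finrank_le_finrank_add_finrank_of_inf_ker_le _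
          (VSpace_inf_ker_coeffsOn_le_kerAll hA hK)
    _ ≤ _ := by grw [card_sdiff_winter_le hS F K]

lemma map_restrictTo_ZSpace_le (hS : ∀ s ∈ S, s⁻¹ ∈ S)
    (hA : ∀ i j, (A i j).coeff.support ⊆ wball S w) (F : Finset G) :
    (ZSpace S w A F).map (restrictTo d F) ≤ kerOn A F (winter S w F) := by
  classical
  rintro _ ⟨f, ⟨hfZ, hAf⟩, rfl⟩
  refine ⟨restrictTo_mem_suppIn F f, fun i p hp => ?_⟩
  -- `f` and its restriction differ only outside `F`, which `A` cannot connect to `Ω_w(F)`.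
  have hrest : ((A.mulVec (f - restrictTo d F f)) i).coeff p = 0 :=
    Finsupp.notMem_support_iff.mp fun hp' =>
      disjoint_left.mp (disjoint_winter_wnbhd hS sdiff_disjoint.symm) hp
        (support_mulVec_subset hA (sub_restrictTo_mem_suppIn hfZ F) i hp')
  rwa [Matrix.mulVec_sub, Pi.sub_apply, MonoidAlgebra.coeff_sub, Finsupp.sub_apply,
    hAf i p (winter_subset w F hp), zero_sub, neg_eq_zero] at hrest

lemma kerOn_winter_inf_ker_le_VSpace [DecidableEq G] (F : Finset G) :
    kerOn A F (winter S w F) ⊓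
      LinearMap.ker ((coeffsOn d (F \ winter S w F)).comp (mulVecL A)) ≤ VSpace A F := by
  rintro f ⟨⟨hfF, hAf⟩, hf0⟩
  refine ⟨hfF, fun i g hg => ?_⟩
  by_cases hgw : g ∈ winter S w F
  · exact hAf i g hgw
  · exact congrFun (congrFun hf0 i) ⟨g, mem_sdiff.mpr ⟨hg, hgw⟩⟩

lemma finrank_map_restrictTo_ZSpace_le (hS : ∀ s ∈ S, s⁻¹ ∈ S)
    (hA : ∀ i j, (A i j).coeff.support ⊆ wball S w) (F : Finset G) :
    finrank ℂ ((ZSpace S w A F).map (restrictTo d F)) ≤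
      finrank ℂ (VSpace A F) + d * (#(wball S w) * #(wbdry S F)) := by
  classical
  calc finrank ℂ ((ZSpace S w A F).map (restrictTo d F))
      ≤ finrank ℂ (kerOn A F (winter S w F)) :=
        Submodule.finrank_mono (map_restrictTo_ZSpace_le hS hA F)
    _ ≤ finrank ℂ (VSpace A F) + d * #(F \ winter S w F) := by
        rw [← finrank_coeffsOn_codomain]
        exact Submodule.finrank_le_finrank_add_finrank_of_inf_ker_le _
          (kerOn_winter_inf_ker_le_VSpace F)
    _ ≤ _ := by grw [card_sdiff_winter_le hS F F w, Finset.sdiff_self, card_empty, add_zero]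

end Estimates

section Asymptotics

variable {ι : Type*} {l : Filter ι} {u v : ι → ℝ} {c c' : ℝ}

lemma eventually_le_mul_of_tendsto_div (hv : ∀ n, 0 < v n)
    (h : Tendsto (fun n => u n / v n) l (𝓝 c)) (hc : c < c') : ∀ᶠ n in l, u n ≤ c' * v n :=
  (h.eventually (eventually_lt_nhds hc)).mono fun n hn => ((div_lt_iff₀ (hv n)).mp hn).le

lemma eventually_mul_le_of_tendsto_div (hv : ∀ n, 0 < v n)
    (h : Tendsto (fun n => u n / v n) l (𝓝 c)) (hc : c' < c) : ∀ᶠ n in l, c' * v n ≤ u n :=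
  (h.eventually (eventually_gt_nhds hc)).mono fun n hn => ((lt_div_iff₀ (hv n)).mp hn).le

end Asymptotics

section Folner

variable {G : Type*} [Group G] {S : Finset G} {F : ℕ → Finset G} {d w : ℕ}
  {A : Matrix (Fin d) (Fin d) (MonoidAlgebra ℂ G)} {c δ : ℝ}

theorem exists_forall_finrank_kerAll_winter_ge (hS : ∀ s ∈ S, s⁻¹ ∈ S)
    (hFpos : ∀ n, 0 < (#(F n) : ℝ))
    (hbdry : Tendsto (fun n => (#(wbdry S (F n)) : ℝ) / #(F n)) atTop (𝓝 0))
    (hA : ∀ i j, (A i j).coeff.support ⊆ wball S w)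
    (hc : Tendsto (fun n => (finrank ℂ (VSpace A (F n)) : ℝ) / #(F n)) atTop (𝓝 c))
    (hcpos : 0 < c) (hδ : 0 < δ) :
    ∃ ε : ℝ, 0 < ε ∧ ∃ N : ℕ, ∀ n ≥ N, ∀ K ⊆ F n, (1 - ε) * #(F n) ≤ (#K : ℝ) →
      (1 - δ) * c * #(F n) ≤ (finrank ℂ (kerAll A (winter S w K)) : ℝ) := by
  classical
  set C : ℝ := d * #(wball S (w + w))
  set ε : ℝ := δ * c / (3 * (C + 1)) with hε_def
  have hε : 0 < ε := by positivity
  have hCε : C * ε ≤ δ * c / 3 := by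
    rw [hε_def, mul_div_assoc', div_le_div_iff₀ (by positivity) (by positivity)]
    nlinarith [mul_pos hδ hcpos]
  obtain ⟨N, hN⟩ := eventually_atTop.mp
    ((eventually_mul_le_of_tendsto_div hFpos hc (by nlinarith : c - δ * c / 3 < c)).and
      (eventually_le_mul_of_tendsto_div hFpos hbdry hε))
  refine ⟨ε, hε, N, fun n hn K hK hKcard => ?_⟩
  obtain ⟨hV, hbd⟩ := hN n hn
  have hFK : (#(F n \ K) : ℝ) ≤ ε * #(F n) := by
    rw [card_sdiff_of_subset hK, Nat.cast_sub (card_le_card hK)]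
    linarith
  have hdim : (finrank ℂ (VSpace A (F n)) : ℝ) ≤
      finrank ℂ (kerAll A (winter S w K)) + C * (#(wbdry S (F n)) + #(F n \ K)) := by
    simp only [C, mul_assoc]
    exact_mod_cast finrank_VSpace_le_finrank_kerAll_winter hS hA hK
  have hloss : C * (#(wbdry S (F n)) + #(F n \ K)) ≤ 2 * (C * ε) * #(F n) :=
    (mul_le_mul_of_nonneg_left (add_le_add hbd hFK) (by positivity)).trans_eq (by ring)
  linarith [mul_le_mul_of_nonneg_right hCε (hFpos n).le]

theorem exists_forall_finrank_map_restrictTo_ZSpace_le (hS : ∀ s ∈ S, s⁻¹ ∈ S)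
    (hFpos : ∀ n, 0 < (#(F n) : ℝ))
    (hbdry : Tendsto (fun n => (#(wbdry S (F n)) : ℝ) / #(F n)) atTop (𝓝 0))
    (hA : ∀ i j, (A i j).coeff.support ⊆ wball S w)
    (hc : Tendsto (fun n => (finrank ℂ (VSpace A (F n)) : ℝ) / #(F n)) atTop (𝓝 c))
    (hδ : 0 < δ) :
    ∃ N : ℕ, ∀ n ≥ N,
      (finrank ℂ ((ZSpace S w A (F n)).map (restrictTo d (F n))) : ℝ) ≤ (c + δ) * #(F n) := by
  classical
  set C : ℝ := d * #(wball S w)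
  have hCbd : Tendsto (fun n => C * #(wbdry S (F n)) / #(F n)) atTop (𝓝 0) := by
    simpa [mul_div_assoc] using hbdry.const_mul C
  obtain ⟨N, hN⟩ := eventually_atTop.mp
    ((eventually_le_mul_of_tendsto_div hFpos hc (by linarith : c < c + δ / 2)).and
      (eventually_le_mul_of_tendsto_div hFpos hCbd (by linarith : (0 : ℝ) < δ / 2)))
  refine ⟨N, fun n hn => ?_⟩
  obtain ⟨hV, hbd⟩ := hN n hn
  have hdim : (finrank ℂ ((ZSpace S w A (F n)).map (restrictTo d (F n))) : ℝ) ≤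
      finrank ℂ (VSpace A (F n)) + C * #(wbdry S (F n)) := by
    simp only [C, mul_assoc]
    exact_mod_cast finrank_map_restrictTo_ZSpace_le hS hA (F n)
  linarith

end Folner

theorem properties_A_minus_plus {G : Type*} [Group G] (S : Finset G) (hS : IsSymmGen S)
    (F : ℕ → Finset G) (hF : IsFolnerExhaustion S F)
    (d w : ℕ) (A : Matrix (Fin d) (Fin d) (MonoidAlgebra ℂ G))
    (hA : ∀ i j, (A i j).coeff.support ⊆ wball S w) (c : ℝ)
    (hc : Tendsto (fun n => (Module.finrank ℂ (VSpace A (F n)) : ℝ) / ((F n).card : ℝ))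
      atTop (𝓝 c)) :
    (∀ δ : ℝ, 0 < δ → ∃ ε : ℝ, 0 < ε ∧ ∃ N : ℕ, ∀ n ≥ N, ∀ K ⊆ F n,
        ((1 - ε) * ((F n).card : ℝ) ≤ (K.card : ℝ)) →
        (1 - δ) * c * ((F n).card : ℝ) ≤ (Module.finrank ℂ (kerAll A (winter S w K)) : ℝ)) ∧
    (∀ δ : ℝ, 0 < δ → ∃ N : ℕ, ∀ n ≥ N,
        (Module.finrank ℂ ((ZSpace S w A (F n)).map (restrictTo d (F n))) : ℝ)
          ≤ (c + δ) * ((F n).card : ℝ)) := by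
  obtain ⟨hS, -⟩ := hS
  obtain ⟨h1F, hFmono, -, hbdry⟩ := hF
  have hFpos : ∀ n, 0 < (#(F n) : ℝ) := fun n => by
    exact_mod_cast card_pos.mpr ⟨1, hFmono n.zero_le h1F⟩
  refine ⟨fun δ hδ => ?_, fun δ hδ =>
    exists_forall_finrank_map_restrictTo_ZSpace_le hS hFpos hbdry hA hc hδ⟩
  rcases (ge_of_tendsto' hc fun n => by positivity : 0 ≤ c).eq_or_lt with rfl | hcpos
  · exact ⟨1, one_pos, 0, fun n _ K _ _ => by simp⟩
  · exact exists_forall_finrank_kerAll_winter_ge hS hFpos hbdry hA hc hcpos hδ
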